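/- arXiv:1712.06622 — 2 statements merged into one kernel-verified Lean document; each statement's English description precedes it below -/
import Mathlib

section
/- Let k ≥ 1 be an integer and let a, b, c, d be real polynomials of degree k whose leading coefficients a_k, b_k, c_k, d_k are all positive. Define f(n) = a(n+1)d(n+1) − (2 b_k / a_k) b(n+1) c(n+1) − (a_k / (2 b_k)) b(n+1) d(n+1). Let m ≥ 2 be an integer such that b(n), c(n), d(n) and f(n) are positive for all integers n ≥ m. Suppose x : ℕ → ℝ satisfies x(n) ≥ (a(n)/b(n)) x(n−1) − (c(n)/d(n)) x(n−2) for all n ≥ m, and suppose x(m−1) > 0 and x(m)/x(m−1) > a_k/(2 b_k). Then x(n−1) > 0 and x(n)/x(n−1) > a_k/(2 b_k) for every integer n ≥ m. -/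
/-!
With `r = a_k / (2 b_k)`, positivity of `f n` says exactly that `r` lies strictly between the roots
of the characteristic polynomial `t² - p t + q` of the recurrence at step `n + 1`, where
`p = a/b` and `q = c/d`. A lower bound `x n > r x (n-1)` then propagates: since `q ≥ 0`,
`x (n+1) ≥ p x n - q x (n-1) > (p - q/r) x n > r x n`.
-/

theorem mul_lt_of_sq_lt_char {p q r y z w : ℝ} (hr : 0 < r) (hq : 0 ≤ q)
    (hchar : r ^ 2 < p * r - q) (hy : 0 < y) (hyz : r * y < z) (hw : p * z - q * y ≤ w) :
    r * z < w := by
  have hz : 0 < z := lt_trans (mul_pos hr hy) hyz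
  have hqy : q * (r * y) ≤ q * z := mul_le_mul_of_nonneg_left hyz.le hq
  nlinarith [mul_lt_mul_of_pos_left hchar hz]

theorem pos_and_mul_lt_of_recurrence {x p q : ℕ → ℝ} {r : ℝ} {m : ℕ} (hr : 0 < r)
    (hq : ∀ n, m ≤ n → 0 ≤ q (n + 1))
    (hchar : ∀ n, m ≤ n → r ^ 2 < p (n + 1) * r - q (n + 1))
    (hx : ∀ n, m ≤ n → p (n + 1) * x n - q (n + 1) * x (n - 1) ≤ x (n + 1))
    (hinit : 0 < x (m - 1)) (hratio : r * x (m - 1) < x m) :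
    ∀ n, m ≤ n → 0 < x (n - 1) ∧ r * x (n - 1) < x n := by
  intro n hn
  induction n, hn using Nat.le_induction with
  | base => exact ⟨hinit, hratio⟩
  | succ n hn ih =>
    obtain ⟨hpos, hlt⟩ := ih
    exact ⟨lt_trans (mul_pos hr hpos) hlt,
      mul_lt_of_sq_lt_char hr (hq n hn) (hchar n hn) hpos hlt (hx n hn)⟩

theorem sq_lt_char_of_pos {A B C D r : ℝ} (hr : 0 < r) (hB : 0 < B) (hD : 0 < D)
    (hf : 0 < A * D - r⁻¹ * (B * C) - r * (B * D)) :
    r ^ 2 < A / B * r - C / D := by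
  have key : A / B * r - C / D - r ^ 2 = r / (B * D) * (A * D - r⁻¹ * (B * C) - r * (B * D)) := by
    field_simp
  have : 0 < r / (B * D) * (A * D - r⁻¹ * (B * C) - r * (B * D)) := by positivity
  linarith

theorem stmt_0_general (a b c d : Polynomial ℝ)
    (hapos : 0 < a.leadingCoeff) (hbpos : 0 < b.leadingCoeff)
    (f : ℕ → ℝ)
    (hf : ∀ n : ℕ, f n =
      a.eval ((n : ℝ) + 1) * d.eval ((n : ℝ) + 1)
      - (2 * b.leadingCoeff / a.leadingCoeff) * (b.eval ((n : ℝ) + 1) * c.eval ((n : ℝ) + 1))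
      - (a.leadingCoeff / (2 * b.leadingCoeff)) * (b.eval ((n : ℝ) + 1) * d.eval ((n : ℝ) + 1)))
    (m : ℕ)
    (hpos : ∀ n : ℕ, m ≤ n →
      0 < b.eval (n : ℝ) ∧ 0 < c.eval (n : ℝ) ∧ 0 < d.eval (n : ℝ) ∧ 0 < f n)
    (x : ℕ → ℝ)
    (hx : ∀ n : ℕ, m ≤ n →
      x n ≥ (a.eval (n : ℝ) / b.eval (n : ℝ)) * x (n - 1)
            - (c.eval (n : ℝ) / d.eval (n : ℝ)) * x (n - 2))
    (hinit : 0 < x (m - 1))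
    (hratio : x m / x (m - 1) > a.leadingCoeff / (2 * b.leadingCoeff)) :
    ∀ n : ℕ, m ≤ n →
      0 < x (n - 1) ∧ x n / x (n - 1) > a.leadingCoeff / (2 * b.leadingCoeff) := by
  set r := a.leadingCoeff / (2 * b.leadingCoeff)
  have hr : 0 < r := by positivity
  have hpos' (n : ℕ) (hn : m ≤ n) := hpos (n + 1) (by omega)
  push_cast at hpos'
  have key := pos_and_mul_lt_of_recurrence (p := fun n ↦ a.eval (n : ℝ) / b.eval (n : ℝ))
    (q := fun n ↦ c.eval (n : ℝ) / d.eval (n : ℝ)) hr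
    (fun n hn ↦ by
      obtain ⟨-, hc, hd, -⟩ := hpos' n hn
      push_cast
      exact div_nonneg hc.le hd.le)
    (fun n hn ↦ by
      obtain ⟨hb, -, hd, -⟩ := hpos' n hn
      push_cast
      refine sq_lt_char_of_pos hr hb hd ?_
      rw [inv_div, ← hf n]
      exact (hpos n hn).2.2.2)
    (fun n hn ↦ by simpa [show n + 1 - 2 = n - 1 by omega] using hx (n + 1) (by omega))
    hinit ((lt_div_iff₀ hinit).mp hratio)
  exact fun n hn ↦ ⟨(key n hn).1, (lt_div_iff₀ (key n hn).1).mpr (key n hn).2⟩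

/-- Ratio-bound theorem for solutions of a second-order linear difference inequality
with polynomial coefficients (Theorem 2 of Appendix A). -/
theorem stmt_0 (k : ℕ) (hk : 1 ≤ k) (a b c d : Polynomial ℝ)
    (hadeg : a.natDegree = k) (hbdeg : b.natDegree = k)
    (hcdeg : c.natDegree = k) (hddeg : d.natDegree = k)
    (hapos : 0 < a.leadingCoeff) (hbpos : 0 < b.leadingCoeff)
    (hcpos : 0 < c.leadingCoeff) (hdpos : 0 < d.leadingCoeff)
    (f : ℕ → ℝ)
    (hf : ∀ n : ℕ, f n =
      a.eval ((n : ℝ) + 1) * d.eval ((n : ℝ) + 1)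
      - (2 * b.leadingCoeff / a.leadingCoeff) * (b.eval ((n : ℝ) + 1) * c.eval ((n : ℝ) + 1))
      - (a.leadingCoeff / (2 * b.leadingCoeff)) * (b.eval ((n : ℝ) + 1) * d.eval ((n : ℝ) + 1)))
    (m : ℕ) (hm : 2 ≤ m)
    (hpos : ∀ n : ℕ, m ≤ n →
      0 < b.eval (n : ℝ) ∧ 0 < c.eval (n : ℝ) ∧ 0 < d.eval (n : ℝ) ∧ 0 < f n)
    (x : ℕ → ℝ)
    (hx : ∀ n : ℕ, m ≤ n →
      x n ≥ (a.eval (n : ℝ) / b.eval (n : ℝ)) * x (n - 1)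
            - (c.eval (n : ℝ) / d.eval (n : ℝ)) * x (n - 2))
    (hinit : 0 < x (m - 1))
    (hratio : x m / x (m - 1) > a.leadingCoeff / (2 * b.leadingCoeff)) :
    ∀ n : ℕ, m ≤ n →
      0 < x (n - 1) ∧ x n / x (n - 1) > a.leadingCoeff / (2 * b.leadingCoeff) :=
  stmt_0_general a b c d hapos hbpos f hf m hpos x hx hinit hratio
end

section
/- For every real Δ with 1/8 ≤ Δ ≤ 1/2 and every natural number n, the Wilson polynomial value P_n((7−2Δ)/6, (4−2Δ)/6, −(1−2Δ)/6, (5+2Δ)/6; (1+4Δ)/6) is strictly positive. -/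
/-!
Multiply `P_n(a,b,c,d;x)` by `(a+b)_n (a+c)_n (a+d)_n` and expand `(n+a+b+c+d-1)_m (a+x)_m` by the
Pfaff–Saalschütz identity
  `(B)_m (C)_m = ∑ₖ C(m,k) (D-B)_k (D-C)_k (B+C-D)_{m-k} (D+k)_{m-k}`
with `D = a+b`. After exchanging the two sums, the inner sum is a balanced ₃F₂, which
Saalschütz's theorem (the same identity read backwards) evaluates to `(c+x)_{n-k} (d+x)_{n-k}`.
Hence
  `(a+b)_n (a+c)_n (a+d)_n P_n`
  `  = ∑ₖ C(n,k) (a-x)_k (b-x)_k (n+c+d-k)_k (a+b+k)_{n-k} (c+x)_{n-k} (d+x)_{n-k}`,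
a sum of nonnegative terms with a positive `k = 0` term as soon as `a-x, b-x, c+d ≥ 0` and
`a+b, a+c, a+d, c+x, d+x > 0`. For the parameters of the theorem these numbers are
`1-Δ, 1/2-Δ, (2+2Δ)/3` and `(11-4Δ)/6, 1, 2, Δ, 1+Δ`.
-/

/-- Pochhammer symbol `(x)_m = x(x+1)⋯(x+m−1)`, with `(x)_0 = 1`. -/
noncomputable def poch (x : ℝ) : ℕ → ℝ
  | 0 => 1
  | m + 1 => poch x m * (x + m)

/-- Wilson polynomial `P_n(a,b,c,d;x)` in its terminating ₄F₃ form. -/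
noncomputable def wilson (a b c d x : ℝ) (n : ℕ) : ℝ :=
  ∑ m ∈ Finset.range (n + 1),
    (poch (-(n : ℝ)) m * poch ((n : ℝ) + a + b + c + d - 1) m
      * poch (a + x) m * poch (a - x) m)
    / (poch (a + b) m * poch (a + c) m * poch (a + d) m * (m.factorial : ℝ))

open Finset Polynomial

@[simp]
lemma poch_zero (x : ℝ) : poch x 0 = 1 := rfl

lemma poch_succ (x : ℝ) (m : ℕ) : poch x (m + 1) = poch x m * (x + m) := rfl

lemma poch_eq_eval_ascPochhammer (x : ℝ) (m : ℕ) : poch x m = (ascPochhammer ℝ m).eval x := by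
  induction m with
  | zero => simp
  | succ m ih => rw [poch_succ, ascPochhammer_succ_eval, ih]

lemma poch_add (x : ℝ) (m n : ℕ) : poch x (m + n) = poch x m * poch (x + m) n := by
  induction n with
  | zero => simp
  | succ n ih => rw [← add_assoc, poch_succ, ih, poch_succ]; push_cast; ring

lemma poch_succ' (x : ℝ) (m : ℕ) : poch x (m + 1) = x * poch (x + 1) m := by
  rw [add_comm, poch_add]; simp [poch_succ]

lemma poch_eq_neg_one_pow_mul (x : ℝ) (m : ℕ) : poch x m = (-1) ^ m * poch (1 - x - m) m := by
  rw [poch_eq_eval_ascPochhammer, poch_eq_eval_ascPochhammer, ← neg_neg x,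
    ascPochhammer_eval_neg_eq_descPochhammer, descPochhammer_eval_eq_ascPochhammer]
  ring_nf

lemma poch_neg_natCast (n m : ℕ) : poch (-n) m = (-1) ^ m * n.choose m * m.factorial := by
  rw [poch_eq_eval_ascPochhammer, ascPochhammer_eval_neg_eq_descPochhammer,
    descPochhammer_eval_eq_descFactorial, Nat.descFactorial_eq_factorial_mul_choose]
  push_cast; ring

lemma poch_pos {x : ℝ} (hx : 0 < x) (m : ℕ) : 0 < poch x m := by
  rw [poch_eq_eval_ascPochhammer]; exact ascPochhammer_pos m x hx

lemma poch_nonneg {x : ℝ} (hx : 0 ≤ x) (m : ℕ) : 0 ≤ poch x m := by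
  induction m with
  | zero => simp
  | succ m ih => rw [poch_succ]; positivity

section Saalschutz

variable (B C D : ℝ)

noncomputable def saalschutzTerm (i j : ℕ) : ℝ :=
  poch (D - B) i * poch (D - C) i * poch (B + C - D) j * poch (D + i) j

-- WZ certificate: the summands of the Pfaff–Saalschütz expansion at `m + 1`, split by Pascal's
-- rule, differ from `(B + m) (C + m)` times those at `m` by its differences in `k`.
noncomputable def saalschutzCert (m k : ℕ) : ℝ :=
  k * (B + C - D + m - k) * (m.choose k * saalschutzTerm B C D k (m - k))

lemma saalschutzTerm_pascal_step {m k : ℕ} (hk : k ≤ m) :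
    m.choose k * (saalschutzTerm B C D k (m + 1 - k) + saalschutzTerm B C D (k + 1) (m - k)) =
      (B + m) * (C + m) * (m.choose k * saalschutzTerm B C D k (m - k)) +
        (saalschutzCert B C D m (k + 1) - saalschutzCert B C D m k) := by
  obtain ⟨j, rfl⟩ := Nat.exists_eq_add_of_le hk
  have hD : D + ((k + 1 : ℕ) : ℝ) = D + k + 1 := by push_cast; ring
  cases j with
  | zero =>
    simp only [saalschutzCert, saalschutzTerm, add_zero, Nat.choose_self,
      Nat.choose_succ_self, Nat.sub_self, show k + 1 - k = 1 by omega]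
    simp only [poch_succ, poch_zero]
    push_cast; ring
  | succ j =>
    have hchoose :
        ((k + j + 1).choose (k + 1) : ℝ) * (k + 1) = (k + j + 1).choose k * (j + 1) := by
      exact_mod_cast (Nat.choose_succ_right_eq (k + j + 1) k).trans (by congr 1; omega)
    simp only [saalschutzCert, saalschutzTerm, show k + (j + 1) + 1 - k = j + 2 by omega,
      show k + (j + 1) - k = j + 1 by omega, show k + (j + 1) - (k + 1) = j by omega, hD,
      poch_succ' (D + k), poch_succ]
    push_cast
    linear_combination -(B + C - D + j) * poch (D - B) k * (D - B + k) * poch (D - C) k *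
      (D - C + k) * poch (B + C - D) j * poch (D + k + 1) j * hchoose

theorem poch_mul_poch_eq_sum_saalschutzTerm (m : ℕ) :
    poch B m * poch C m =
      ∑ k ∈ range (m + 1), (m.choose k : ℝ) * saalschutzTerm B C D k (m - k) := by
  induction m with
  | zero => simp [saalschutzTerm]
  | succ m ih =>
    have hlast : saalschutzCert B C D m (m + 1) = 0 := by simp [saalschutzCert]
    have hfirst : saalschutzCert B C D m 0 = 0 := by simp [saalschutzCert]
    rw [sum_choose_succ_mul (saalschutzTerm B C D) m, ← sum_add_distrib]
    simp only [← mul_add]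
    rw [sum_congr rfl fun k hk =>
        saalschutzTerm_pascal_step B C D (Nat.lt_succ_iff.mp (mem_range.mp hk)),
      sum_add_distrib, sum_range_sub (saalschutzCert B C D m), hlast, hfirst, ← mul_sum, ← ih,
      poch_succ, poch_succ]
    ring

end Saalschutz

lemma neg_one_pow_mul_self (j : ℕ) : ((-1 : ℝ) ^ j) * (-1) ^ j = 1 :=
  pow_mul_pow_eq_one j (by norm_num)

theorem sum_balanced_eq_poch_mul_poch (a c d x : ℝ) (N : ℕ) :
    ∑ j ∈ range (N + 1), (-1) ^ j * (N.choose j : ℝ) * poch (a - x) j *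
        poch (N + a + c + d + x - 1) j * poch (a + c + j) (N - j) * poch (a + d + j) (N - j) =
      poch (c + x) N * poch (d + x) N := by
  have hsaal := poch_mul_poch_eq_sum_saalschutzTerm (c + x) (1 - N - d - x) (a + c) N
  rw [poch_eq_neg_one_pow_mul (1 - N - d - x), show 1 - (1 - N - d - x) - N = d + x by ring]
    at hsaal
  refine mul_left_cancel₀ (pow_ne_zero N (by norm_num) : ((-1 : ℝ) ^ N) ≠ 0) ?_
  rw [mul_sum, show (-1) ^ N * (poch (c + x) N * poch (d + x) N) =
    poch (c + x) N * ((-1) ^ N * poch (d + x) N) by ring, hsaal]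
  refine sum_congr rfl fun j hj => ?_
  obtain ⟨r, rfl⟩ := Nat.exists_eq_add_of_le (Nat.lt_succ_iff.mp (mem_range.mp hj))
  rw [saalschutzTerm, Nat.add_sub_cancel_left,
    poch_eq_neg_one_pow_mul (c + x + (1 - ↑(j + r) - d - x) - (a + c)),
    show 1 - (c + x + (1 - ↑(j + r) - d - x) - (a + c)) - r = a + d + j by push_cast; ring]
  push_cast
  rw [show a + c - (c + x) = a - x by ring,
    show a + c - (1 - (j + r : ℝ) - d - x) = j + r + a + c + d + x - 1 by ring, pow_add]
  linear_combination (-1) ^ r * (j + r).choose j * poch (a - x) j *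
    poch (j + r + a + c + d + x - 1) j * poch (a + c + j) r * poch (a + d + j) r *
    neg_one_pow_mul_self j

lemma poch_eq_mul_poch_sub (x : ℝ) {m n : ℕ} (h : m ≤ n) :
    poch x n = poch x m * poch (x + m) (n - m) := by
  obtain ⟨r, rfl⟩ := Nat.exists_eq_add_of_le h
  rw [poch_add, Nat.add_sub_cancel_left]

lemma sum_sum_range_succ_comm {M : Type*} [AddCommMonoid M] (F : ℕ → ℕ → M) (n : ℕ) :
    ∑ m ∈ range (n + 1), ∑ k ∈ range (m + 1), F m k =
      ∑ k ∈ range (n + 1), ∑ j ∈ range (n + 1 - k), F (k + j) k := by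
  rw [← sum_range_diag_flip]
  refine sum_congr rfl fun m _ => sum_congr rfl fun k hk => ?_
  rw [Nat.add_sub_cancel' (Nat.lt_succ_iff.mp (mem_range.mp hk))]

lemma wilson_summand_mul_poch {a b c d x : ℝ} {n m : ℕ} (hmn : m ≤ n)
    (hb : poch (a + b) n ≠ 0) (hc : poch (a + c) n ≠ 0) (hd : poch (a + d) n ≠ 0) :
    poch (a + b) n * poch (a + c) n * poch (a + d) n *
      (poch (-(n : ℝ)) m * poch ((n : ℝ) + a + b + c + d - 1) m * poch (a + x) m *
          poch (a - x) m /
        (poch (a + b) m * poch (a + c) m * poch (a + d) m * (m.factorial : ℝ))) =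
    (-1) ^ m * n.choose m * poch (a - x) m * poch (a + b + m) (n - m) *
      poch (a + c + m) (n - m) * poch (a + d + m) (n - m) *
      (poch ((n : ℝ) + a + b + c + d - 1) m * poch (a + x) m) := by
  rw [poch_eq_mul_poch_sub _ hmn] at hb hc hd ⊢
  rw [poch_eq_mul_poch_sub (a + c) hmn, poch_eq_mul_poch_sub (a + d) hmn, poch_neg_natCast]
  have hm : (m.factorial : ℝ) ≠ 0 := by positivity
  field_simp [left_ne_zero_of_mul hb, left_ne_zero_of_mul hc, left_ne_zero_of_mul hd]

lemma wilson_double_summand_factor (a b c d x : ℝ) (k j r : ℕ) :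
    (-1) ^ (k + j) * ((k + j + r).choose (k + j) : ℝ) * poch (a - x) (k + j) *
        poch (a + b + (k + j : ℕ)) r * poch (a + c + (k + j : ℕ)) r *
        poch (a + d + (k + j : ℕ)) r *
      ((k + j).choose k *
        saalschutzTerm ((k + j + r : ℕ) + a + b + c + d - 1) (a + x) (a + b) k j) =
    ((k + j + r).choose k * poch (a - x) k * poch (b - x) k *
        poch ((k + j + r : ℕ) + c + d - k) k * poch (a + b + k) (j + r)) *
      ((-1) ^ j * ((j + r).choose j : ℝ) * poch (a + k - x) j *
        poch ((j + r : ℕ) + (a + k) + c + d + x - 1) j * poch (a + k + c + j) r *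
        poch (a + k + d + j) r) := by
  have hchoose : ((k + j + r).choose (k + j) : ℝ) * (k + j).choose k =
      (k + j + r).choose k * (j + r).choose j := by
    have := Nat.choose_mul (n := k + j + r) (k := k + j) (s := k) (by omega)
    rw [show k + j + r - k = j + r by omega, show k + j - k = j by omega] at this
    exact_mod_cast this
  have hrefl : (-1) ^ k * poch (a + b - ((k + j + r : ℕ) + a + b + c + d - 1)) k =
      poch ((k + j + r : ℕ) + c + d - k) k := by
    rw [poch_eq_neg_one_pow_mul, ← mul_assoc, neg_one_pow_mul_self, one_mul]
    congr 1; push_cast; ring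
  rw [saalschutzTerm, poch_add (a - x), poch_add (a + b + k), ← hrefl, pow_add]
  push_cast
  rw [show a - x + k = a + k - x by ring, show a + b - (a + x) = b - x by ring,
    show (k + j + r : ℝ) + a + b + c + d - 1 + (a + x) - (a + b) = j + r + (a + k) + c + d + x - 1
      by ring, show a + b + (k + j : ℝ) = a + b + k + j by ring,
    show a + c + (k + j : ℝ) = a + k + c + j by ring,
    show a + d + (k + j : ℝ) = a + k + d + j by ring]
  linear_combination (-1) ^ k * (-1) ^ j * poch (a - x) k * poch (a + k - x) j *
    poch (a + b + k + j) r * poch (a + k + c + j) r * poch (a + k + d + j) r *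
    poch (a + b - ((k + j + r : ℝ) + a + b + c + d - 1)) k * poch (b - x) k *
    poch (j + r + (a + k) + c + d + x - 1) j * poch (a + b + k) j * hchoose

theorem poch_mul_wilson_eq_sum {a b c d x : ℝ} {n : ℕ}
    (hb : poch (a + b) n ≠ 0) (hc : poch (a + c) n ≠ 0) (hd : poch (a + d) n ≠ 0) :
    poch (a + b) n * poch (a + c) n * poch (a + d) n * wilson a b c d x n =
      ∑ k ∈ range (n + 1), n.choose k * poch (a - x) k * poch (b - x) k *
        poch (n + c + d - k) k * poch (a + b + k) (n - k) *
        (poch (c + x) (n - k) * poch (d + x) (n - k)) := by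
  rw [wilson, mul_sum, sum_congr rfl fun m hm =>
      wilson_summand_mul_poch (Nat.lt_succ_iff.mp (mem_range.mp hm)) hb hc hd]
  simp_rw [poch_mul_poch_eq_sum_saalschutzTerm _ (a + x) (a + b), mul_sum]
  rw [sum_sum_range_succ_comm]
  refine sum_congr rfl fun k hk => ?_
  obtain ⟨N, rfl⟩ := Nat.exists_eq_add_of_le (Nat.lt_succ_iff.mp (mem_range.mp hk))
  rw [show k + N + 1 - k = N + 1 by omega, Nat.add_sub_cancel_left,
    ← sum_balanced_eq_poch_mul_poch (a + k), mul_sum]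
  refine sum_congr rfl fun j hj => ?_
  obtain ⟨r, rfl⟩ := Nat.exists_eq_add_of_le (Nat.lt_succ_iff.mp (mem_range.mp hj))
  rw [show k + (j + r) - (k + j) = r by omega, Nat.add_sub_cancel_left, Nat.add_sub_cancel_left,
    ← add_assoc, wilson_double_summand_factor]

theorem wilson_pos {a b c d x : ℝ} (n : ℕ)
    (hab : 0 < a + b) (hac : 0 < a + c) (had : 0 < a + d) (hax : 0 ≤ a - x) (hbx : 0 ≤ b - x)
    (hcd : 0 ≤ c + d) (hcx : 0 < c + x) (hdx : 0 < d + x) :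
    0 < wilson a b c d x n := by
  have hnorm : 0 < poch (a + b) n * poch (a + c) n * poch (a + d) n := by
    have := poch_pos hab n; have := poch_pos hac n; have := poch_pos had n; positivity
  refine pos_of_mul_pos_right ?_ hnorm.le
  rw [poch_mul_wilson_eq_sum (poch_pos hab n).ne' (poch_pos hac n).ne' (poch_pos had n).ne']
  refine sum_pos' (fun k hk => ?_) ⟨0, by simp, ?_⟩
  · have hkn : (k : ℝ) ≤ n := by exact_mod_cast Nat.lt_succ_iff.mp (mem_range.mp hk)
    have := poch_nonneg hax k; have := poch_nonneg hbx k
    have := poch_nonneg (show 0 ≤ (n : ℝ) + c + d - k by linarith) k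
    have := poch_nonneg (show 0 ≤ a + b + k by positivity) (n - k)
    have := poch_pos hcx (n - k); have := poch_pos hdx (n - k)
    positivity
  · simp only [Nat.choose_zero_right, Nat.cast_zero, Nat.cast_one, poch_zero, add_zero,
      Nat.sub_zero, one_mul]
    have := poch_pos hab n; have := poch_pos hcx n; have := poch_pos hdx n
    positivity

theorem stmt_1 (Δ : ℝ) (h1 : 1/8 ≤ Δ) (h2 : Δ ≤ 1/2) (n : ℕ) :
    0 < wilson ((7 - 2*Δ)/6) ((4 - 2*Δ)/6) (-(1 - 2*Δ)/6) ((5 + 2*Δ)/6) ((1 + 4*Δ)/6) n := by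
  apply wilson_pos n <;> linarith
end
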